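/- Let (G,f) = der_θ(G,·) with θ^(n-1) = id, and suppose every idempotent of (G,f) is central in (G,·). Then Aut(G,f) is isomorphic to the semidirect product C_{Aut(G,·)}(θ) ⋉ Z*(G), where C_{Aut(G,·)}(θ) = {φ ∈ Aut(G,·) : φθ = θφ} acts on Z*(G) = {a ∈ Z(G) : a·θ(a)···θ^(n-1)(a) = a} by φ·a = φ(a). -/

import Mathlib

/-- The `(θ,b)`-derived `n`-ary operation on a group `G`. -/
def derOp {G : Type*} [Group G] (n : ℕ) (θ : MulAut G) (b : G) (x : Fin n → G) : G :=
  (List.ofFn fun i : Fin n => (θ ^ (i : ℕ)) (x i)).prod * b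

/-- The automorphism group of an `n`-ary groupoid `(G,f)`. -/
def nAryAut {G : Type*} [Group G] (n : ℕ) (f : (Fin n → G) → G) :
    Subgroup (Equiv.Perm G) where
  carrier := {ψ | ∀ x : Fin n → G, ψ (f x) = f (fun i => ψ (x i))}
  one_mem' := by intro x; simp
  mul_mem' := by
    intro ψ χ hψ hχ x
    simp only [Equiv.Perm.mul_apply, Set.mem_setOf_eq] at *
    rw [hχ, hψ]
  inv_mem' := by
    intro ψ hψ x
    apply ψ.injective
    rw [Equiv.Perm.coe_inv, Equiv.apply_symm_apply, hψ]
    congr 1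
    funext i
    rw [Equiv.apply_symm_apply]

/-!
An automorphism `ψ` of `(G, f)` maps the idempotent `1` to an idempotent `a = ψ 1`, which is
central by hypothesis. Then `φ = R_{a⁻¹} ψ` fixes `1`, and evaluating `ψ` on tuples
`(x, y, 1, …, 1)` gives `φ (x * θ y) = φ x * θ (φ y)`; this twisted multiplicativity forces `φ`
to commute with `θ` and to be an automorphism of `(G, ·)`. Conversely each `R_a φ` with
`a ∈ Z*(G)` and `φ ∈ C(θ)` is an automorphism of `(G, f)`, and `(a, φ) ↦ R_a φ` is a
homomorphism out of the semidirect product, injective by evaluation at `1`.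
-/

section
variable {G : Type*} [Group G]

theorem List.prod_map_mul_of_mem_center {ι : Type*} (l : List ι) (f g : ι → G)
    (hg : ∀ i ∈ l, g i ∈ Subgroup.center G) :
    (l.map fun i => f i * g i).prod = (l.map f).prod * (l.map g).prod := by
  induction l with
  | nil => simp
  | cons i l ih =>
    have hgi := Subgroup.mem_center_iff.mp (hg i List.mem_cons_self)
    simp only [List.map_cons, List.prod_cons]
    rw [ih fun j hj => hg j (List.mem_cons_of_mem i hj), mul_assoc, ← mul_assoc (g i), ← hgi]
    group

theorem derOp_const_one (n : ℕ) (θ : MulAut G) : derOp n θ 1 (fun _ => (1 : G)) = 1 := by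
  simp [derOp]

theorem derOp_mul_const {n : ℕ} (θ : MulAut G) (x : Fin n → G) {a : G}
    (ha : a ∈ Subgroup.center G) :
    derOp n θ 1 (fun i => x i * a) = derOp n θ 1 x * derOp n θ 1 (fun _ => a) := by
  simp only [derOp, mul_one, map_mul, List.ofFn_eq_map]
  exact List.prod_map_mul_of_mem_center _ _ _ fun i _ => MulEquivClass.apply_mem_center _ ha

theorem derOp_cons_cons_one {m : ℕ} (θ : MulAut G) (x y : G) :
    derOp (m + 2) θ 1 (Fin.cons x (Fin.cons y 1)) = x * θ y := by
  simp [derOp, List.ofFn_succ]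

theorem derOp_map {n : ℕ} {θ φ : MulAut G} (h : Commute φ θ) (x : Fin n → G) :
    derOp n θ 1 (fun i => φ (x i)) = φ (derOp n θ 1 x) := by
  simp only [derOp, mul_one, List.ofFn_eq_map, map_list_prod, List.map_map]
  congr 2
  funext i
  exact (DFunLike.congr_fun (h.pow_right i).eq (x i)).symm

end

section
variable {G : Type*} [Group G] (n : ℕ) (θ : MulAut G)

def centralIdempotents : Subgroup G where
  carrier := {a | a ∈ Subgroup.center G ∧ derOp n θ 1 (fun _ => a) = a}
  one_mem' := ⟨one_mem _, derOp_const_one n θ⟩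
  mul_mem' := fun {a b} ⟨ha, ha'⟩ ⟨hb, hb'⟩ =>
    ⟨mul_mem ha hb, by rw [derOp_mul_const θ (fun _ => a) hb, ha', hb']⟩
  inv_mem' := fun {a} ⟨ha, ha'⟩ => by
    refine ⟨inv_mem ha, eq_inv_of_mul_eq_one_right ?_⟩
    have h := derOp_mul_const (n := n) θ (fun _ => a) (inv_mem ha)
    rwa [ha', mul_inv_cancel, derOp_const_one, eq_comm] at h

variable {n θ}

theorem mem_centralIdempotents {a : G} :
    a ∈ centralIdempotents n θ ↔ a ∈ Subgroup.center G ∧ derOp n θ 1 (fun _ => a) = a :=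
  Iff.rfl

theorem apply_mem_centralIdempotents {φ : MulAut G} (hφ : Commute φ θ) {a : G}
    (ha : a ∈ centralIdempotents n θ) : φ a ∈ centralIdempotents n θ :=
  ⟨MulEquivClass.apply_mem_center φ ha.1, (derOp_map hφ fun _ => a).trans (congrArg φ ha.2)⟩

theorem mulRight_mem_nAryAut {a : G} (ha : a ∈ centralIdempotents n θ) :
    Equiv.mulRight a ∈ nAryAut n (derOp n θ 1) := fun x =>
  ((derOp_mul_const θ x ha.1).trans (congrArg _ ha.2)).symm

theorem toPerm_mem_nAryAut {φ : MulAut G} (hφ : Commute φ θ) :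
    MulAut.toPerm G φ ∈ nAryAut n (derOp n θ 1) := fun x =>
  (derOp_map hφ x).symm

variable (n θ)

def centralizerAct : Subgroup.centralizer {θ} →* MulAut (centralIdempotents n θ) where
  toFun φ :=
    { toFun a := ⟨(φ : MulAut G) a,
        apply_mem_centralIdempotents (Subgroup.mem_centralizer_singleton_iff.mp φ.2) a.2⟩
      invFun a := ⟨((φ⁻¹ : Subgroup.centralizer {θ}) : MulAut G) a,
        apply_mem_centralIdempotents (Subgroup.mem_centralizer_singleton_iff.mp φ⁻¹.2) a.2⟩
      left_inv a := by ext; simp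
      right_inv a := by ext; simp
      map_mul' a b := by ext; simp }
  map_one' := by ext; simp
  map_mul' φ χ := by ext; simp

def mulRightHom : centralIdempotents n θ →* nAryAut n (derOp n θ 1) where
  toFun a := ⟨Equiv.mulRight a, mulRight_mem_nAryAut a.2⟩
  map_one' := by ext; simp
  map_mul' a b := by ext x; simp [mul_assoc, Subgroup.mem_center_iff.mp a.2.1]

def centralizerToNAryAut : Subgroup.centralizer {θ} →* nAryAut n (derOp n θ 1) :=
  ((MulAut.toPerm G).comp (Subgroup.centralizer {θ}).subtype).codRestrict _ fun φ =>
    toPerm_mem_nAryAut (Subgroup.mem_centralizer_singleton_iff.mp φ.2)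

def semidirectToNAryAut :
    centralIdempotents n θ ⋊[centralizerAct n θ] Subgroup.centralizer {θ} →*
      nAryAut n (derOp n θ 1) :=
  SemidirectProduct.lift (mulRightHom n θ) (centralizerToNAryAut n θ) fun φ => by
    ext a x
    change x * (φ : MulAut G) a = (φ : MulAut G) ((φ : MulAut G)⁻¹ x * a)
    rw [map_mul, MulAut.apply_inv_self]

end

section
variable {G : Type*} [Group G]

theorem apply_comm_of_map_mul_twisted {θ : MulAut G} {φ : G → G} (h1 : φ 1 = 1)
    (h : ∀ x y, φ (x * θ y) = φ x * θ (φ y)) (y : G) : φ (θ y) = θ (φ y) := by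
  simpa [h1] using h 1 y

theorem map_mul_of_map_mul_twisted {θ : MulAut G} {φ : G → G} (h1 : φ 1 = 1)
    (h : ∀ x y, φ (x * θ y) = φ x * θ (φ y)) (x y : G) : φ (x * y) = φ x * φ y := by
  have hxy := h x (θ⁻¹ y)
  rwa [MulAut.apply_inv_self, ← apply_comm_of_map_mul_twisted h1 h, MulAut.apply_inv_self] at hxy

variable {n : ℕ} {θ : MulAut G} {ψ : Equiv.Perm G}

theorem derOp_const_apply_one (hψ : ψ ∈ nAryAut n (derOp n θ 1)) :
    derOp n θ 1 (fun _ => ψ 1) = ψ 1 := by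
  have h := hψ fun _ => 1
  rw [derOp_const_one] at h
  exact h.symm

theorem apply_one_mem_centralIdempotents
    (hcent : ∀ a : G, derOp n θ 1 (fun _ : Fin n => a) = a → a ∈ Subgroup.center G)
    (hψ : ψ ∈ nAryAut n (derOp n θ 1)) : ψ 1 ∈ centralIdempotents n θ :=
  ⟨hcent _ (derOp_const_apply_one hψ), derOp_const_apply_one hψ⟩

theorem map_mul_twisted_of_mem_nAryAut {m : ℕ} (hψ : ψ ∈ nAryAut (m + 2) (derOp (m + 2) θ 1))
    (ha : ψ 1 ∈ Subgroup.center G) (x y : G) :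
    ψ (x * θ y) * (ψ 1)⁻¹ = ψ x * (ψ 1)⁻¹ * θ (ψ y * (ψ 1)⁻¹) := by
  have h := hψ (Fin.cons x (Fin.cons y 1))
  have hargs : (fun i => ψ ((Fin.cons x (Fin.cons y 1) : Fin (m + 2) → G) i)) = fun i =>
      (Fin.cons (ψ x * (ψ 1)⁻¹) (Fin.cons (ψ y * (ψ 1)⁻¹) 1) : Fin (m + 2) → G) i * ψ 1 := by
    funext i
    refine Fin.cases ?_ (Fin.cases ?_ fun _ => ?_) i <;> simp
  rw [derOp_cons_cons_one, hargs, derOp_mul_const θ _ ha, derOp_const_apply_one hψ,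
    derOp_cons_cons_one] at h
  rw [h, mul_inv_cancel_right]

end

section
variable {G : Type*} [Group G] (n : ℕ) (θ : MulAut G)

theorem semidirectToNAryAut_apply
    (p : centralIdempotents n θ ⋊[centralizerAct n θ] Subgroup.centralizer {θ}) (x : G) :
    (semidirectToNAryAut n θ p : Equiv.Perm G) x = (p.right : MulAut G) x * p.left :=
  rfl

theorem semidirectToNAryAut_injective : Function.Injective (semidirectToNAryAut n θ) := by
  rw [injective_iff_map_eq_one]
  intro p hp
  have hfix : ∀ x, (p.right : MulAut G) x * p.left = x := fun x => by
    rw [← semidirectToNAryAut_apply, hp]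
    rfl
  have hleft : p.left = 1 := Subtype.ext (by simpa using hfix 1)
  have hright : p.right = 1 := Subtype.ext (MulEquiv.ext fun x => by simpa [hleft] using hfix x)
  exact SemidirectProduct.ext hleft hright

theorem semidirectToNAryAut_surjective (hn : 2 ≤ n)
    (hcent : ∀ a : G, derOp n θ 1 (fun _ : Fin n => a) = a → a ∈ Subgroup.center G) :
    Function.Surjective (semidirectToNAryAut n θ) := by
  obtain ⟨m, rfl⟩ : ∃ m, n = m + 2 := ⟨n - 2, by omega⟩
  rintro ⟨ψ, hψ⟩
  have ha := apply_one_mem_centralIdempotents hcent hψ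
  have htw := map_mul_twisted_of_mem_nAryAut hψ ha.1
  have h1 : ψ 1 * (ψ 1)⁻¹ = 1 := mul_inv_cancel _
  let φ : MulAut G :=
    { ψ.trans (Equiv.mulRight (ψ 1)⁻¹) with
      map_mul' := map_mul_of_map_mul_twisted (φ := fun z => ψ z * (ψ 1)⁻¹) h1 htw }
  have hφ : φ ∈ Subgroup.centralizer {θ} := Subgroup.mem_centralizer_singleton_iff.mpr
    (MulEquiv.ext (apply_comm_of_map_mul_twisted (φ := fun z => ψ z * (ψ 1)⁻¹) h1 htw))
  exact ⟨⟨⟨ψ 1, ha⟩, ⟨φ, hφ⟩⟩, Subtype.ext (Equiv.ext fun x => inv_mul_cancel_right (ψ x) (ψ 1))⟩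

end

theorem aut_eq_semidirect_product_general {G : Type*} [Group G] (n : ℕ) (hn : 2 ≤ n)
    (θ : MulAut G)
    (hcent : ∀ a : G, derOp n θ 1 (fun _ : Fin n => a) = a → a ∈ Subgroup.center G) :
    ∃ S : Subgroup G,
      (∀ a : G, a ∈ S ↔ a ∈ Subgroup.center G ∧ derOp n θ 1 (fun _ : Fin n => a) = a) ∧
      ∃ act : Subgroup.centralizer ({θ} : Set (MulAut G)) →* MulAut S,
        (∀ (φ : Subgroup.centralizer ({θ} : Set (MulAut G))) (a : S),
          ((act φ a : G)) = (φ : MulAut G) (a : G)) ∧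
        Nonempty ((S ⋊[act] Subgroup.centralizer ({θ} : Set (MulAut G)))
          ≃* nAryAut n (derOp n θ 1)) :=
  ⟨centralIdempotents n θ, fun _ => mem_centralIdempotents, centralizerAct n θ, fun _ _ => rfl,
    ⟨MulEquiv.ofBijective (semidirectToNAryAut n θ)
      ⟨semidirectToNAryAut_injective n θ, semidirectToNAryAut_surjective n θ hn hcent⟩⟩⟩

theorem aut_eq_semidirect_product {G : Type*} [Group G] (n : ℕ) (hn : 2 ≤ n)
    (θ : MulAut G) (hθ : θ ^ (n - 1) = 1)
    (hcent : ∀ a : G, derOp n θ 1 (fun _ : Fin n => a) = a → a ∈ Subgroup.center G) :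
    ∃ S : Subgroup G,
      (∀ a : G, a ∈ S ↔ a ∈ Subgroup.center G ∧ derOp n θ 1 (fun _ : Fin n => a) = a) ∧
      ∃ act : Subgroup.centralizer ({θ} : Set (MulAut G)) →* MulAut S,
        (∀ (φ : Subgroup.centralizer ({θ} : Set (MulAut G))) (a : S),
          ((act φ a : G)) = (φ : MulAut G) (a : G)) ∧
        Nonempty ((S ⋊[act] Subgroup.centralizer ({θ} : Set (MulAut G)))
          ≃* nAryAut n (derOp n θ 1)) :=
  aut_eq_semidirect_product_general n hn θ hcent
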